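/- For q a strictly positive pmf on a finite set X and Π a closed convex subset of the simplex, the I-projection of q on Π exists and is unique: the function p ↦ I(p||q) = ∑ p(x) log(p(x)/q(x)) is strictly convex and lower semicontinuous on the simplex, hence attains a unique minimum on Π. -/

import Mathlib

open Finset Real

def simplexSet (X : Type*) [Fintype X] : Set (X → ℝ) :=
  {p | (∀ x, 0 ≤ p x) ∧ ∑ x, p x = 1}

noncomputable def Idiv {X : Type*} [Fintype X] (p q : X → ℝ) : ℝ :=
  ∑ x, p x * Real.log (p x / q x)

section aux
variable {X : Type*} [Fintype X]

lemma Idiv_eq (q : X → ℝ) (hq_pos : ∀ x, 0 < q x) (p : X → ℝ) :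
    Idiv p q = ∑ x, q x * ((p x / q x) * Real.log (p x / q x)) := by
  unfold Idiv
  refine Finset.sum_congr rfl fun x _ => ?_
  rw [← mul_assoc, mul_div_cancel₀ _ (hq_pos x).ne']

lemma strictConvex_aux (q : X → ℝ) (hq_pos : ∀ x, 0 < q x) :
    StrictConvexOn ℝ (simplexSet X) (fun p => Idiv p q) := by
  constructor
  · exact fun p hp p' hp' a b ha hb hab => ⟨fun x => by
      have := hp.1 x; have := hp'.1 x
      simp only [Pi.add_apply, Pi.smul_apply, smul_eq_mul]; positivity, by
      simp only [Pi.add_apply, Pi.smul_apply, smul_eq_mul, Finset.sum_add_distrib,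
        ← Finset.mul_sum, hp.2, hp'.2, hab, mul_one]⟩
  · intro p hp p' hp' hne a b ha hb hab
    simp only [Idiv_eq q hq_pos, smul_eq_mul, Finset.mul_sum, ← Finset.sum_add_distrib]
    have hrw : ∀ x, (a • p + b • p') x / q x = a * (p x / q x) + b * (p' x / q x) := by
      intro x
      simp only [Pi.add_apply, Pi.smul_apply, smul_eq_mul]
      field_simp
    refine Finset.sum_lt_sum (fun x _ => ?_) ?_
    · rw [hrw x]
      have hu : (0:ℝ) ≤ p x / q x := div_nonneg (hp.1 x) (hq_pos x).le
      have hv : (0:ℝ) ≤ p' x / q x := div_nonneg (hp'.1 x) (hq_pos x).le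
      have h := Real.convexOn_mul_log.2 (Set.mem_Ici.mpr hu) (Set.mem_Ici.mpr hv)
        ha.le hb.le hab
      simp only [smul_eq_mul] at h
      have h2 := mul_le_mul_of_nonneg_left h (hq_pos x).le
      ring_nf at h2 ⊢
      linarith
    · obtain ⟨x, hx⟩ := Function.ne_iff.mp hne
      refine ⟨x, Finset.mem_univ x, ?_⟩
      rw [hrw x]
      have hu : (0:ℝ) ≤ p x / q x := div_nonneg (hp.1 x) (hq_pos x).le
      have hv : (0:ℝ) ≤ p' x / q x := div_nonneg (hp'.1 x) (hq_pos x).le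
      have huv : p x / q x ≠ p' x / q x := fun h => hx (by
        have hq := (hq_pos x).ne'
        field_simp [hq] at h; exact h)
      have h := Real.strictConvexOn_mul_log.2 (Set.mem_Ici.mpr hu) (Set.mem_Ici.mpr hv)
        huv ha hb hab
      simp only [smul_eq_mul] at h
      have h2 := mul_lt_mul_of_pos_left h (hq_pos x)
      ring_nf at h2 ⊢
      linarith

lemma cont_aux (q : X → ℝ) (hq_pos : ∀ x, 0 < q x) :
    Continuous (fun p : X → ℝ => Idiv p q) := by
  have : (fun p : X → ℝ => Idiv p q)
      = fun p => ∑ x, q x * ((p x / q x) * Real.log (p x / q x)) := by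
    funext p; exact Idiv_eq q hq_pos p
  rw [this]
  refine continuous_finset_sum _ fun x _ => Continuous.mul continuous_const ?_
  exact Real.continuous_mul_log.comp ((continuous_apply x : Continuous fun p : X → ℝ => p x).div_const (q x))

lemma compact_simplex : IsCompact (simplexSet X) := by
  have hsc : IsClosed (simplexSet X) := by
    have h1 : IsClosed {p : X → ℝ | ∀ x, 0 ≤ p x} := by
      rw [Set.setOf_forall]
      exact isClosed_iInter fun x => isClosed_le continuous_const (continuous_apply x)
    have h2 : IsClosed {p : X → ℝ | ∑ x, p x = 1} :=
      isClosed_eq (by continuity) continuous_const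
    exact h1.inter h2
  have hsub : simplexSet X ⊆ Set.pi Set.univ (fun _ : X => Set.Icc (0:ℝ) 1) := by
    rintro p ⟨hp0, hp1⟩ x _
    refine ⟨hp0 x, ?_⟩
    rw [← hp1]
    exact Finset.single_le_sum (fun y _ => hp0 y) (Finset.mem_univ x)
  exact (isCompact_univ_pi fun _ => isCompact_Icc).of_isClosed_subset hsc hsub

end aux

/-- Existence and uniqueness of the I-projection: `I(·‖q)` is strictly convex and lower
semicontinuous on the simplex, hence attains a unique minimum on any closed convex `Π`. -/
theorem stmt11 {X : Type*} [Fintype X] (q : X → ℝ)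
    (hq_pos : ∀ x, 0 < q x) (hq_sum : ∑ x, q x = 1)
    (Pi : Set (X → ℝ)) (hPine : Pi.Nonempty) (hPisub : Pi ⊆ simplexSet X)
    (hPiconv : Convex ℝ Pi) (hPicl : IsClosed Pi) :
    StrictConvexOn ℝ (simplexSet X) (fun p => Idiv p q) ∧
    LowerSemicontinuousOn (fun p => Idiv p q) (simplexSet X) ∧
    ∃! phat : X → ℝ, phat ∈ Pi ∧ ∀ p ∈ Pi, Idiv phat q ≤ Idiv p q := by
  have hsc := strictConvex_aux q hq_pos
  have hcont := cont_aux q hq_pos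
  refine ⟨hsc, (hcont.lowerSemicontinuous).lowerSemicontinuousOn _, ?_⟩
  have hPicomp : IsCompact Pi := compact_simplex.of_isClosed_subset hPicl hPisub
  obtain ⟨phat, hmem, hmin⟩ := hPicomp.exists_isMinOn hPine hcont.continuousOn
  refine ⟨phat, ⟨hmem, fun p hp => hmin hp⟩, ?_⟩
  rintro y ⟨hy, hymin⟩
  exact (hsc.subset hPisub hPiconv).eq_of_isMinOn
    (isMinOn_iff.mpr fun p hp => hymin p hp) (isMinOn_iff.mpr fun p hp => hmin hp) hy hmem
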